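/- arXiv:1504.01067 — 2 statements merged into one kernel-verified Lean document; each statement's English description precedes it below -/
import Mathlib

section
/- Let V be a 2n-dimensional symplectic space over a finite field F_q of odd order, and let X, Y, Z be maximal totally isotropic subspaces that are pairwise 'adjacent', i.e. each pairwise intersection has codimension 1 in each of them. If X, Y, Z are pairwise distinct and W is a fourth maximal totally isotropic subspace adjacent to both Y and Z, then W cannot be at distance ≥ 2 from X; equivalently, the diamond graph (4 vertices X,Y,Z,W with all pairs adjacent except X,W) is not an induced subgraph of the dual polar graph. Concretely: if X,Y,Z are pairwise adjacent generators and W is a generator adjacent to Y and to Z, then dim(X ∩ W) ≥ n−1. -/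
open Module

/-!
Three pairwise adjacent generators `X, Y, Z` pass through a common hyperplane of each:
if `Y ⊓ X ≠ Y ⊓ Z`, these two hyperplanes of `Y` span `Y`, so `Y ≤ X ⊔ Z` and
`X ⊓ Z ≤ (X ⊔ Z)^⊥ ≤ Y^⊥ = Y`, forcing `X ⊓ Z = Y ⊓ X = Y ⊓ Z`. Applying this to the
triangles `X, Y, Z` and `Z, Y, W` gives `Y ⊓ X = Y ⊓ Z = Y ⊓ W ≤ X ⊓ W`.
-/

namespace Submodule

variable {K V : Type*} [Field K] [AddCommGroup V] [Module K V] [FiniteDimensional K V]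

theorem sup_eq_of_ne_of_finrank_add_one_eq {A C Y : Submodule K V} (hA : A ≤ Y) (hC : C ≤ Y)
    (hAY : finrank K A + 1 = finrank K Y) (hCY : finrank K C + 1 = finrank K Y) (hAC : A ≠ C) :
    A ⊔ C = Y := by
  have hAlt : A < A ⊔ C := by
    refine lt_of_le_of_ne le_sup_left fun h => hAC ?_
    exact (eq_of_le_of_finrank_le (h ▸ le_sup_right) (by omega)).symm
  have := finrank_lt_finrank_of_lt hAlt
  exact eq_of_le_of_finrank_le (sup_le hA hC) (by omega)

end Submodule

namespace LinearMap.BilinForm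

variable {K V : Type*} [Field K] [AddCommGroup V] [Module K V]

theorem inf_le_orthogonal_sup {B : LinearMap.BilinForm K V} {X Z : Submodule K V}
    (hX : X ≤ B.orthogonal X) (hZ : Z ≤ B.orthogonal Z) :
    X ⊓ Z ≤ B.orthogonal (X ⊔ Z) := by
  rintro v ⟨hvX, hvZ⟩ u hu
  obtain ⟨x, hx, z, hz, rfl⟩ := Submodule.mem_sup.mp hu
  change B (x + z) v = 0
  rw [map_add, LinearMap.add_apply, hX hvX x hx, hZ hvZ z hz, add_zero]

theorem finrank_eq_of_orthogonal_eq_self [FiniteDimensional K V] {B : LinearMap.BilinForm K V}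
    (hB : B.Nondegenerate) {n : ℕ} (hdim : finrank K V = 2 * n) {X : Submodule K V}
    (hX : B.orthogonal X = X) : finrank K X = n := by
  have hXV := Submodule.finrank_le X
  have := finrank_orthogonal hB X
  rw [hX, hdim] at this
  omega

theorem inf_eq_inf_of_pairwise_adjacent [FiniteDimensional K V] {B : LinearMap.BilinForm K V}
    {X Y Z : Submodule K V} (hX : X ≤ B.orthogonal X) (hY : B.orthogonal Y ≤ Y)
    (hZ : Z ≤ B.orthogonal Z) (hYX : finrank K ↥(Y ⊓ X) + 1 = finrank K Y)
    (hYZ : finrank K ↥(Y ⊓ Z) + 1 = finrank K Y)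
    (hXZ : finrank K ↥(X ⊓ Z) = finrank K ↥(Y ⊓ X)) :
    Y ⊓ X = Y ⊓ Z := by
  by_contra hne
  have hY_le : Y ≤ X ⊔ Z := by
    rw [← Submodule.sup_eq_of_ne_of_finrank_add_one_eq inf_le_left inf_le_left hYX hYZ hne]
    exact sup_le_sup inf_le_right inf_le_right
  have hXZ_le : X ⊓ Z ≤ Y :=
    (inf_le_orthogonal_sup hX hZ).trans ((B.orthogonal_le hY_le).trans hY)
  have hX_eq : X ⊓ Z = Y ⊓ X :=
    Submodule.eq_of_le_of_finrank_le (le_inf hXZ_le inf_le_left) hXZ.ge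
  have hZ_eq : X ⊓ Z = Y ⊓ Z :=
    Submodule.eq_of_le_of_finrank_le (le_inf hXZ_le inf_le_right) (by omega)
  exact hne (hX_eq.symm.trans hZ_eq)

end LinearMap.BilinForm

theorem no_induced_diamond_in_dual_polar_graph_general
    {F : Type*} [Field F]
    {V : Type*} [AddCommGroup V] [Module F V] [FiniteDimensional F V]
    (n : ℕ) (hdim : finrank F V = 2 * n)
    (B : LinearMap.BilinForm F V) (hnd : B.Nondegenerate)
    (X Y Z W : Submodule F V)
    (hX : B.orthogonal X = X) (hY : B.orthogonal Y = Y)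
    (hZ : B.orthogonal Z = Z) (hW : B.orthogonal W = W)
    (hadjXY : finrank F ↥(X ⊓ Y) = n - 1)
    (hadjXZ : finrank F ↥(X ⊓ Z) = n - 1)
    (hadjYZ : finrank F ↥(Y ⊓ Z) = n - 1)
    (hadjYW : finrank F ↥(Y ⊓ W) = n - 1)
    (hadjZW : finrank F ↥(Z ⊓ W) = n - 1) :
    n - 1 ≤ finrank F ↥(X ⊓ W) := by
  rcases Nat.eq_zero_or_pos n with rfl | hn
  · exact Nat.zero_le _
  have hdY := LinearMap.BilinForm.finrank_eq_of_orthogonal_eq_self hnd hdim hY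
  rw [inf_comm] at hadjXY
  have hYX_YZ : Y ⊓ X = Y ⊓ Z :=
    LinearMap.BilinForm.inf_eq_inf_of_pairwise_adjacent hX.ge hY.le hZ.ge
      (by omega) (by omega) (by omega)
  have hYZ_YW : Y ⊓ Z = Y ⊓ W :=
    LinearMap.BilinForm.inf_eq_inf_of_pairwise_adjacent hZ.ge hY.le hW.ge
      (by omega) (by omega) (by omega)
  have hle : Y ⊓ X ≤ X ⊓ W :=
    le_inf inf_le_right ((hYX_YZ.trans hYZ_YW).le.trans inf_le_right)
  exact hadjXY.ge.trans (Submodule.finrank_mono hle)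

/-- In the symplectic dual polar graph over a finite field of odd order, the diamond is not
an induced subgraph: if `X, Y, Z` are pairwise adjacent generators (maximal totally isotropic
subspaces, pairwise intersections of codimension 1) and `W` is a generator adjacent to both
`Y` and `Z`, then `dim (X ⊓ W) ≥ n - 1`, so `X` and `W` cannot be at distance ≥ 2. -/
theorem no_induced_diamond_in_dual_polar_graph
    {F : Type*} [Field F] [Fintype F] (hodd : Odd (Fintype.card F))
    {V : Type*} [AddCommGroup V] [Module F V] [FiniteDimensional F V]
    (n : ℕ) (hdim : finrank F V = 2 * n)
    (B : LinearMap.BilinForm F V) (halt : ∀ v : V, B v v = 0) (hnd : B.Nondegenerate)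
    (X Y Z W : Submodule F V)
    (hX : B.orthogonal X = X) (hY : B.orthogonal Y = Y)
    (hZ : B.orthogonal Z = Z) (hW : B.orthogonal W = W)
    (hXY : X ≠ Y) (hXZ : X ≠ Z) (hYZ : Y ≠ Z)
    (hadjXY : finrank F ↥(X ⊓ Y) = n - 1)
    (hadjXZ : finrank F ↥(X ⊓ Z) = n - 1)
    (hadjYZ : finrank F ↥(Y ⊓ Z) = n - 1)
    (hadjYW : finrank F ↥(Y ⊓ W) = n - 1)
    (hadjZW : finrank F ↥(Z ⊓ W) = n - 1) :
    n - 1 ≤ finrank F ↥(X ⊓ W) :=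
  no_induced_diamond_in_dual_polar_graph_general n hdim B hnd X Y Z W hX hY hZ hW hadjXY hadjXZ
    hadjYZ hadjYW hadjZW
end

section
/- If X, Y, Z are three pairwise adjacent maximal totally isotropic subspaces of a symplectic space (i.e. pairwise intersections have codimension 1), then X ⊆ Y + Z and Y ∩ Z ⊆ X. -/
open Module

/-!
A self-orthogonal subspace of a nondegenerate space has half its dimension; hence, for two such
subspaces `Y` and `Z`, `(Y ⊓ Z)ᗮ` and `Y ⊔ Z` have the same dimension, so `(Y ⊓ Z)ᗮ = Y ⊔ Z`.
Taking orthogonals then shows `X ≤ Y ⊔ Z ↔ Y ⊓ Z ≤ X`. If the hyperplanes `X ⊓ Y` and `X ⊓ Z`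
of `X` coincide, this common hyperplane is `Y ⊓ Z`, which therefore lies in `X`; otherwise they
span `X`, so `X ≤ Y ⊔ Z`.
-/

namespace Submodule

variable {K V : Type*} [DivisionRing K] [AddCommGroup V] [Module K V] [FiniteDimensional K V]

theorem sup_eq_of_finrank_eq_sub_one {P Q W : Submodule K V} (hP : P ≤ W) (hQ : Q ≤ W)
    (hPd : finrank K P = finrank K W - 1) (hQd : finrank K Q = finrank K W - 1) (hPQ : P ≠ Q) :
    P ⊔ Q = W := by
  have hlt : P < P ⊔ Q := by
    refine lt_of_le_of_ne le_sup_left fun h => hPQ ?_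
    exact (eq_of_le_of_finrank_eq (h ▸ le_sup_right : Q ≤ P) (by omega)).symm
  have := finrank_lt_finrank_of_lt hlt
  exact eq_of_le_of_finrank_le (sup_le hP hQ) (by omega)

end Submodule

namespace LinearMap.BilinForm

section CommSemiring

variable {R M : Type*} [CommSemiring R] [AddCommMonoid M] [Module R M]
  {B : LinearMap.BilinForm R M}

theorem orthogonal_sup (N L : Submodule R M) :
    B.orthogonal (N ⊔ L) = B.orthogonal N ⊓ B.orthogonal L := by
  refine le_antisymm (le_inf (orthogonal_le le_sup_left) (orthogonal_le le_sup_right)) ?_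
  rintro m ⟨hN, hL⟩ x hx
  obtain ⟨a, ha, b, hb, rfl⟩ := Submodule.mem_sup.mp hx
  simp [hN a ha, hL b hb]

end CommSemiring

variable {K V : Type*} [Field K] [AddCommGroup V] [Module K V] [FiniteDimensional K V]
  {B : LinearMap.BilinForm K V} {X Y Z : Submodule K V}

theorem two_mul_finrank_eq_of_orthogonal_eq_self (hB : B.Nondegenerate)
    (hY : B.orthogonal Y = Y) : 2 * finrank K Y = finrank K V := by
  have h := finrank_orthogonal hB Y
  rw [hY] at h
  have := Y.finrank_le
  omega

theorem orthogonal_inf_eq_sup_of_orthogonal_eq_self (hB : B.Nondegenerate)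
    (hY : B.orthogonal Y = Y) (hZ : B.orthogonal Z = Z) : B.orthogonal (Y ⊓ Z) = Y ⊔ Z := by
  have hle : Y ⊔ Z ≤ B.orthogonal (Y ⊓ Z) :=
    sup_le (hY.ge.trans (orthogonal_le inf_le_left)) (hZ.ge.trans (orthogonal_le inf_le_right))
  have hdim := finrank_orthogonal hB (Y ⊓ Z)
  have hsup := Submodule.finrank_sup_add_finrank_inf_eq Y Z
  have := two_mul_finrank_eq_of_orthogonal_eq_self hB hY
  have := two_mul_finrank_eq_of_orthogonal_eq_self hB hZ
  exact (Submodule.eq_of_le_of_finrank_le hle (by omega)).symm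

theorem le_sup_iff_inf_le_of_orthogonal_eq_self (hB : B.Nondegenerate)
    (hX : B.orthogonal X = X) (hY : B.orthogonal Y = Y) (hZ : B.orthogonal Z = Z) :
    X ≤ Y ⊔ Z ↔ Y ⊓ Z ≤ X := by
  constructor
  · intro h
    calc Y ⊓ Z = B.orthogonal (Y ⊔ Z) := by rw [orthogonal_sup, hY, hZ]
      _ ≤ B.orthogonal X := orthogonal_le h
      _ = X := hX
  · intro h
    calc X = B.orthogonal X := hX.symm
      _ ≤ B.orthogonal (Y ⊓ Z) := orthogonal_le h
      _ = Y ⊔ Z := orthogonal_inf_eq_sup_of_orthogonal_eq_self hB hY hZ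

end LinearMap.BilinForm

open LinearMap.BilinForm in
theorem adjacent_generators_sub_sup_and_inf_le_general
    {F : Type*} [Field F] {V : Type*} [AddCommGroup V] [Module F V] [FiniteDimensional F V]
    (n : ℕ)
    (B : LinearMap.BilinForm F V) (hnd : B.Nondegenerate)
    (X Y Z : Submodule F V)
    (hX : B.orthogonal X = X) (hY : B.orthogonal Y = Y) (hZ : B.orthogonal Z = Z)
    (hdX : finrank F ↥X = n)
    (hadjXY : finrank F ↥(X ⊓ Y) = n - 1)
    (hadjXZ : finrank F ↥(X ⊓ Z) = n - 1)
    (hadjYZ : finrank F ↥(Y ⊓ Z) = n - 1) :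
    X ≤ Y ⊔ Z ∧ Y ⊓ Z ≤ X := by
  have key := le_sup_iff_inf_le_of_orthogonal_eq_self hnd hX hY hZ
  suffices h : X ≤ Y ⊔ Z from ⟨h, key.mp h⟩
  by_cases hXYZ : X ⊓ Y = X ⊓ Z
  · have hle : X ⊓ Y ≤ Y ⊓ Z := le_inf inf_le_right (hXYZ ▸ inf_le_right)
    have heq : X ⊓ Y = Y ⊓ Z := Submodule.eq_of_le_of_finrank_eq hle (by rw [hadjXY, hadjYZ])
    exact key.mpr (heq ▸ inf_le_left)
  · calc X = X ⊓ Y ⊔ X ⊓ Z :=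
          (Submodule.sup_eq_of_finrank_eq_sub_one inf_le_left inf_le_left
            (by rw [hadjXY, hdX]) (by rw [hadjXZ, hdX]) hXYZ).symm
      _ ≤ Y ⊔ Z := sup_le_sup inf_le_right inf_le_right

/-- If `X, Y, Z` are three pairwise adjacent maximal totally isotropic subspaces of a
`2n`-dimensional symplectic space (pairwise intersections of codimension 1), then
`X ⊆ Y + Z` and `Y ∩ Z ⊆ X`. -/
theorem adjacent_generators_sub_sup_and_inf_le
    {F : Type*} [Field F] {V : Type*} [AddCommGroup V] [Module F V] [FiniteDimensional F V]
    (n : ℕ) (hdim : finrank F V = 2 * n)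
    (B : LinearMap.BilinForm F V) (halt : ∀ v : V, B v v = 0) (hnd : B.Nondegenerate)
    (X Y Z : Submodule F V)
    (hX : B.orthogonal X = X) (hY : B.orthogonal Y = Y) (hZ : B.orthogonal Z = Z)
    (hdX : finrank F ↥X = n) (hdY : finrank F ↥Y = n) (hdZ : finrank F ↥Z = n)
    (hadjXY : finrank F ↥(X ⊓ Y) = n - 1)
    (hadjXZ : finrank F ↥(X ⊓ Z) = n - 1)
    (hadjYZ : finrank F ↥(Y ⊓ Z) = n - 1)
    (hXY : X ≠ Y) (hXZ : X ≠ Z) (hYZ : Y ≠ Z) :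
    X ≤ Y ⊔ Z ∧ Y ⊓ Z ≤ X :=
  adjacent_generators_sub_sup_and_inf_le_general n B hnd X Y Z hX hY hZ hdX hadjXY hadjXZ hadjYZ
end
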